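/- arXiv:1910.03409 — 2 statements merged into one kernel-verified Lean document; each statement's English description precedes it below -/
import Mathlib

section
/- Let G be a connected proper interval graph with vertex ordering v₁, ..., v_n by increasing interval start point. Then the distance function from v₁ is monotone along the ordering: for all i < j, dist_G(v₁, v_i) ≤ dist_G(v₁, v_j). -/
/-- In a connected proper interval graph (unit intervals, distinct start points),
distances from the first vertex `s` (the one with minimum start point) are monotone
along the ordering by start points. -/
theorem proper_interval_dist_monotone {V : Type*} (G : SimpleGraph V) (b : V → ℝ)
    (hinj : Function.Injective b)
    (hadj : ∀ u v, G.Adj u v ↔ u ≠ v ∧ |b u - b v| ≤ 1)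
    (hconn : G.Connected)
    (s : V) (hfirst : ∀ v, b s ≤ b v) :
    ∀ u w, b u < b w → G.edist s u ≤ G.edist s w := by
  have key : ∀ n : ℕ, ∀ w u, G.dist s w ≤ n → b u < b w → G.dist s u ≤ n := by
    intro n
    induction n with
    | zero =>
      intro w u hw hbu
      exfalso
      have hws : w = s := by
        have := (hconn s w).dist_eq_zero_iff.mp (Nat.le_zero.mp hw)
        exact this.symm
      exact absurd (hfirst u) (by rw [← hws]; linarith)
    | succ n ih =>
      intro w u hw hbu
      rcases Nat.lt_succ_iff_lt_or_eq.mp (Nat.lt_succ_of_le hw) with h | h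
      · exact le_trans (ih w u (Nat.lt_succ_iff.mp h) hbu) (Nat.le_succ n)
      · -- dist s w = n+1, so w ≠ s
        have hws : w ≠ s := by
          intro he; rw [he, SimpleGraph.dist_self] at h; omega
        obtain ⟨q, hq⟩ := hconn.exists_walk_length_eq_dist w s
        cases q with
        | nil => exact absurd rfl hws
        | cons hadj' q' =>
          rename_i x
          have hlen : q'.length = n := by
            simp only [SimpleGraph.Walk.length_cons] at hq
            rw [SimpleGraph.dist_comm] at hq
            omega
          have hdx : G.dist s x ≤ n := by
            have := SimpleGraph.dist_le q'.reverse
            rwa [SimpleGraph.Walk.length_reverse, hlen] at this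
          by_cases hux : u = x
          · exact le_trans (hux ▸ hdx) (Nat.le_succ n)
          · by_cases hclose : |b u - b x| ≤ 1
            · have hadjux : G.Adj u x := (hadj u x).mpr ⟨hux, hclose⟩
              calc G.dist s u ≤ G.dist s x + G.dist x u := hconn.dist_triangle
                _ ≤ n + 1 := by
                    have : G.dist x u = 1 := SimpleGraph.dist_eq_one_iff_adj.mpr hadjux.symm
                    omega
            · -- |b u - b x| > 1; show b u < b x
              have hwx : |b w - b x| ≤ 1 := ((hadj w x).mp hadj').2
              have hux' : b u < b x := by
                rcases lt_or_ge (b u) (b x) with h' | h'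
                · exact h'
                · exfalso
                  rw [abs_le] at hwx
                  rw [not_le, lt_abs] at hclose
                  rcases hclose with h2 | h2 <;> linarith
              exact le_trans (ih x u hdx hux') (Nat.le_succ n)
  intro u w hbu
  have hru : G.Reachable s u := hconn s u
  have hrw : G.Reachable s w := hconn s w
  have heu : G.edist s u = (G.dist s u : ℕ∞) := by
    rw [SimpleGraph.dist, ENat.coe_toNat (SimpleGraph.edist_ne_top_iff_reachable.mpr hru)]
  have hew : G.edist s w = (G.dist s w : ℕ∞) := by
    rw [SimpleGraph.dist, ENat.coe_toNat (SimpleGraph.edist_ne_top_iff_reachable.mpr hrw)]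
  rw [heu, hew]
  exact_mod_cast key (G.dist s w) w u le_rfl hbu
end

section
/- Let G be a proper interval graph with unit-interval representation and distinct start points, vertices ordered v₁, ..., v_n by start point, with s = v₁. Suppose F is an edge set such that in H = G − F the distances from s are monotone along the ordering (i < j implies dist_H(s, v_i) ≤ dist_H(s, v_j)). Then for every vertex v_j and every shortest s-v_j path in H, there exists a shortest s-v_j path in H that is monotone, i.e., visits vertices in strictly increasing order of their start points. -/
/-!
Along a shortest walk from `s` the distance from `s` goes up by one at every step. Read
contrapositively, monotonicity of the distance in `b` turns a strict increase of the distance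
into a strict increase of `b`, so every shortest path from `s` is already monotone.
-/

namespace SimpleGraph

variable {V : Type*} {G : SimpleGraph V}

lemma Walk.isChain_gt_map_edist_right_of_length_eq_dist {u v : V} (p : G.Walk u v)
    (hp : p.length = G.dist u v) : (p.support.map (G.edist · v)).IsChain (· > ·) := by
  induction p with
  | nil => simp
  | @cons x y w h q ih =>
    have hq : q.length = G.dist y w := length_eq_dist_of_subwalk hp (q.isSubwalk_cons h)
    have hlt : G.edist y w < G.edist x w := by
      rw [← q.reachable.coe_dist_eq_edist, ← (q.cons h).reachable.coe_dist_eq_edist, ← hq, ← hp,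
        length_cons]
      exact_mod_cast q.length.lt_succ_self
    have ih := ih hq
    rw [← q.cons_tail_support] at ih
    rw [support_cons, ← q.cons_tail_support]
    exact ih.cons_cons hlt

lemma Walk.isChain_lt_map_edist_left_of_length_eq_dist {u v : V} (p : G.Walk u v)
    (hp : p.length = G.dist u v) : (p.support.map (G.edist u)).IsChain (· < ·) := by
  have h := p.reverse.isChain_gt_map_edist_right_of_length_eq_dist
    (by rwa [length_reverse, dist_comm])
  rw [support_reverse, List.map_reverse, List.isChain_reverse] at h
  simpa only [edist_comm] using h

theorem Walk.isChain_lt_map_of_edist_monotone {α : Type*} [LinearOrder α] {u v : V}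
    (f : V → α) (hf : ∀ x y, f x ≤ f y → G.edist u x ≤ G.edist u y) (p : G.Walk u v)
    (hp : p.length = G.dist u v) : (p.support.map f).IsChain (· < ·) :=
  List.isChain_map f |>.mpr <| (List.isChain_map _ |>.mp
    (p.isChain_lt_map_edist_left_of_length_eq_dist hp)).imp fun _ _ hxy ↦
      lt_of_not_ge fun hyx ↦ (hf _ _ hyx).not_gt hxy

end SimpleGraph

theorem proper_interval_monotone_shortest_path_general {V : Type*} (G : SimpleGraph V)
    (b : V → ℝ)
    (s : V)
    (F : Set (Sym2 V))
    (hmono : ∀ u w, b u ≤ b w →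
      (G.deleteEdges F).edist s u ≤ (G.deleteEdges F).edist s w) :
    ∀ v : V, (G.deleteEdges F).Reachable s v →
      ∃ p : (G.deleteEdges F).Walk s v, p.IsPath ∧
        (p.length : ℕ∞) = (G.deleteEdges F).edist s v ∧
        (p.support.map b).Chain' (· < ·) := by
  intro v hv
  obtain ⟨p, hpath, hp⟩ := hv.exists_path_of_dist
  exact ⟨p, hpath, by rw [hp, hv.coe_dist_eq_edist],
    p.isChain_lt_map_of_edist_monotone b hmono hp⟩

/-- In a proper interval graph (unit intervals, distinct start points) with `s` the
first vertex, if after deleting an edge set `F` the distances from `s` are monotone in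
the start points, then every vertex reachable from `s` admits a shortest path from `s`
that is monotone (visits vertices in strictly increasing order of start points). -/
theorem proper_interval_monotone_shortest_path {V : Type*} (G : SimpleGraph V)
    (b : V → ℝ) (hinj : Function.Injective b)
    (hadj : ∀ u v, G.Adj u v ↔ u ≠ v ∧ |b u - b v| ≤ 1)
    (s : V) (hfirst : ∀ v, b s ≤ b v)
    (F : Set (Sym2 V))
    (hmono : ∀ u w, b u ≤ b w →
      (G.deleteEdges F).edist s u ≤ (G.deleteEdges F).edist s w) :
    ∀ v : V, (G.deleteEdges F).Reachable s v →
      ∃ p : (G.deleteEdges F).Walk s v, p.IsPath ∧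
        (p.length : ℕ∞) = (G.deleteEdges F).edist s v ∧
        (p.support.map b).Chain' (· < ·) :=
  proper_interval_monotone_shortest_path_general G b s F hmono
end
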